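/- For the PPDG iterates, for every k ≥ 1 one has 𝓛(x^{k+1}, y^{k+1}, x^{k+2}, x^k) + c(‖x^{k+1} - x^k‖² + ‖x^k - x^{k-1}‖²) ≤ 𝓛(x^k, y^k, x^{k+1}, x^{k-1}); in particular the sequence k ↦ 𝓛(z^k) is nonincreasing. -/

import Mathlib

/-!
The primal update is a gradient step, so the descent lemma lowers `f + ⟪y^k, A ·⟫` by
`(1/α - L/2) ‖x^{k+1} - x^k‖²`. The dual update is a proximal step in the metric `M = α A Aᵀ`;
tested at `y^{k+2}`, its optimality condition bounds the change of the dual part of the Lagrangian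
by an inner product with `Aᵀ(y^{k+2} - y^{k+1})`. By the primal update, each `α Aᵀ(y^{j+1} - y^j)`
is a second difference of `x` minus `α (∇f(x^{j+1}) - ∇f(x^j))`, and the extrapolation
`2x^{k+1} - x^k` cancels the second difference, leaving the cross terms
`L ‖x^k - x^{k-1}‖ (‖x^{k+2} - x^{k+1}‖ + (1 + αL) ‖x^{k+1} - x^k‖)`. Two weighted AM-GM
inequalities absorb them into the quadratic terms of the Lyapunov function; `a`, `b`, `c` are
exactly the resulting weights.
-/

open RealInnerProductSpace

noncomputable section

/-- The Lyapunov function `𝓛(x,y,u,v) = L(x,y) - a‖x-u‖² + b‖x-v‖²` where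
`L(x,y) = f(x) + ⟪y, Ax⟫ - h*(y)` is the Lagrangian. -/
def Lyap {X : Type*} [NormedAddCommGroup X] [InnerProductSpace ℝ X]
    {Y : Type*} [NormedAddCommGroup Y] [InnerProductSpace ℝ Y]
    (A : X →L[ℝ] Y) (f : X → ℝ) (hs : Y → ℝ) (a b : ℝ)
    (p : X) (q : Y) (u v : X) : ℝ :=
  (f p + ⟪q, A p⟫ - hs q) - a * ‖p - u‖^2 + b * ‖p - v‖^2

open Filter Topology Set

theorem le_add_deriv_add_of_deriv_sub_le {φ φ' : ℝ → ℝ} {K : ℝ}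
    (hφ : ∀ t ∈ Icc (0 : ℝ) 1, HasDerivAt φ (φ' t) t)
    (hK : ∀ t ∈ Icc (0 : ℝ) 1, φ' t - φ' 0 ≤ K * t) :
    φ 1 ≤ φ 0 + φ' 0 + K / 2 := by
  set ψ : ℝ → ℝ := fun t => φ t - t * φ' 0 - K / 2 * t ^ 2
  have hψ : ∀ t ∈ Icc (0 : ℝ) 1, HasDerivAt ψ (φ' t - φ' 0 - K * t) t := by
    intro t ht
    have h := ((hφ t ht).sub ((hasDerivAt_id t).mul_const (φ' 0))).sub
      ((hasDerivAt_pow 2 t).const_mul (K / 2))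
    exact h.congr_deriv (by norm_num; ring)
  have hanti : AntitoneOn ψ (Icc 0 1) :=
    antitoneOn_of_hasDerivWithinAt_nonpos (convex_Icc 0 1)
      (fun t ht => (hψ t ht).continuousAt.continuousWithinAt)
      (fun t ht => (hψ t (interior_subset ht)).hasDerivWithinAt)
      (fun t ht => by linarith [hK t (interior_subset ht)])
  have := hanti (left_mem_Icc.2 zero_le_one) (right_mem_Icc.2 zero_le_one) zero_le_one
  simp only [ψ] at this
  linarith

theorem le_add_inner_add_sq_of_lipschitz_gradient {X : Type*} [NormedAddCommGroup X]
    [InnerProductSpace ℝ X] [CompleteSpace X] {f : X → ℝ} {f' : X → X} {L : ℝ}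
    (hf : ∀ p, HasGradientAt f (f' p) p) (hL : ∀ p q, ‖f' p - f' q‖ ≤ L * ‖p - q‖) (p q : X) :
    f q ≤ f p + ⟪f' p, q - p⟫ + L / 2 * ‖q - p‖ ^ 2 := by
  set u := q - p
  have hline : ∀ t : ℝ, HasDerivAt (fun s : ℝ => f (p + s • u)) ⟪f' (p + t • u), u⟫ t := by
    intro t
    simpa [Function.comp_def] using (hf (p + t • u)).hasFDerivAt.comp_hasDerivAt t
      (((hasDerivAt_id t).smul_const u).const_add p)
  have hK : ∀ t ∈ Icc (0 : ℝ) 1,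
      ⟪f' (p + t • u), u⟫ - ⟪f' (p + (0 : ℝ) • u), u⟫ ≤ L * ‖u‖ ^ 2 * t := by
    intro t ht
    rw [zero_smul, add_zero, ← inner_sub_left]
    calc ⟪f' (p + t • u) - f' p, u⟫ ≤ ‖f' (p + t • u) - f' p‖ * ‖u‖ := real_inner_le_norm _ _
      _ ≤ L * ‖p + t • u - p‖ * ‖u‖ := by gcongr; exact hL _ _
      _ = L * ‖u‖ ^ 2 * t := by
        rw [add_sub_cancel_left, norm_smul, Real.norm_of_nonneg ht.1]; ring
  have := le_add_deriv_add_of_deriv_sub_le (fun t _ => hline t) hK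
  simp only [zero_smul, one_smul, add_zero, u, add_sub_cancel] at this
  linarith

theorem ConvexOn.le_add_inner_of_forall_le_add_sq {E F : Type*} [AddCommGroup E] [Module ℝ E]
    [NormedAddCommGroup F] [InnerProductSpace ℝ F] {g : E → ℝ} (hg : ConvexOn ℝ univ g)
    (T : E →ₗ[ℝ] F) {α : ℝ} {y₀ y₁ : E}
    (hmin : ∀ w, g y₁ + α / 2 * ‖T (y₁ - y₀)‖ ^ 2 ≤ g w + α / 2 * ‖T (w - y₀)‖ ^ 2) (w : E) :
    g y₁ ≤ g w + α * ⟪T (y₁ - y₀), T (w - y₁)⟫ := by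
  set c := g w - g y₁ + α * ⟪T (y₁ - y₀), T (w - y₁)⟫
  set d := α / 2 * ‖T (w - y₁)‖ ^ 2
  have hseg : ∀ t ∈ Ioc (0 : ℝ) 1, 0 ≤ c + t * d := by
    rintro t ⟨ht₀, ht₁⟩
    have hconv : g (y₁ + t • (w - y₁)) ≤ (1 - t) * g y₁ + t * g w := by
      have h := hg.2 (mem_univ y₁) (mem_univ w) (sub_nonneg.2 ht₁) ht₀.le (sub_add_cancel 1 t)
      rwa [smul_eq_mul, smul_eq_mul, show (1 - t) • y₁ + t • w = y₁ + t • (w - y₁) by module]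
        at h
    have hsq : ‖T (y₁ + t • (w - y₁) - y₀)‖ ^ 2 = ‖T (y₁ - y₀)‖ ^ 2
        + 2 * t * ⟪T (y₁ - y₀), T (w - y₁)⟫ + t ^ 2 * ‖T (w - y₁)‖ ^ 2 := by
      rw [show y₁ + t • (w - y₁) - y₀ = (y₁ - y₀) + t • (w - y₁) by abel, map_add, map_smul,
        norm_add_sq_real, real_inner_smul_right, norm_smul, mul_pow, Real.norm_eq_abs, sq_abs]
      ring
    have hmin_t := hmin (y₁ + t • (w - y₁))
    rw [hsq] at hmin_t
    have : 0 ≤ t * (c + t * d) := by simp only [c, d]; linarith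
    exact nonneg_of_mul_nonneg_right this ht₀
  have hlim : Tendsto (fun t : ℝ => c + t * d) (𝓝[>] 0) (𝓝 c) := by
    have : Continuous (fun t : ℝ => c + t * d) := by fun_prop
    simpa using (this.tendsto 0).mono_left nhdsWithin_le_nhds
  have := ge_of_tendsto hlim (eventually_of_mem (Ioc_mem_nhdsGT zero_lt_one) hseg)
  linarith

theorem real_inner_smul_apply_adjoint_self {X Y : Type*} [NormedAddCommGroup X]
    [InnerProductSpace ℝ X] [CompleteSpace X] [NormedAddCommGroup Y] [InnerProductSpace ℝ Y]
    [CompleteSpace Y] (A : X →L[ℝ] Y) (α : ℝ) (d : Y) :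
    ⟪α • A (ContinuousLinearMap.adjoint A d), d⟫ = α * ‖ContinuousLinearMap.adjoint A d‖ ^ 2 := by
  rw [real_inner_smul_left, ← ContinuousLinearMap.adjoint_inner_right,
    real_inner_self_eq_norm_sq]

namespace PPDG

open ContinuousLinearMap

variable {X Y : Type*} [NormedAddCommGroup X] [InnerProductSpace ℝ X] [CompleteSpace X]
  [NormedAddCommGroup Y] [InnerProductSpace ℝ Y] [CompleteSpace Y]

def lagrangian (A : X →L[ℝ] Y) (f : X → ℝ) (hs : Y → ℝ) (p : X) (q : Y) : ℝ :=
  f p + ⟪q, A p⟫ - hs q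

def PrimalUpdate (A : X →L[ℝ] Y) (f' : X → X) (α : ℝ) (x : ℕ → X) (y : ℕ → Y) : Prop :=
  ∀ k, x (k + 1) = x k - α • (f' (x k) + adjoint A (y k))

def DualUpdate (A : X →L[ℝ] Y) (hs : Y → ℝ) (α : ℝ) (x : ℕ → X) (y : ℕ → Y) : Prop :=
  ∀ k w, hs (y (k + 1)) - ⟪y (k + 1), A ((2 : ℝ) • x (k + 1) - x k)⟫
      + 1 / 2 * ⟪α • A (adjoint A (y (k + 1) - y k)), y (k + 1) - y k⟫
    ≤ hs w - ⟪w, A ((2 : ℝ) • x (k + 1) - x k)⟫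
      + 1 / 2 * ⟪α • A (adjoint A (w - y k)), w - y k⟫

variable {A : X →L[ℝ] Y} {f : X → ℝ} {f' : X → X} {hs : Y → ℝ} {Lf α : ℝ} {x : ℕ → X} {y : ℕ → Y}

theorem smul_adjoint_sub_eq (hx : PrimalUpdate A f' α x y) (k : ℕ) :
    α • adjoint A (y (k + 1) - y k)
      = (x (k + 1) - x (k + 2)) - (x k - x (k + 1)) - α • (f' (x (k + 1)) - f' (x k)) := by
  have hv : ∀ j, α • adjoint A (y j) = x j - x (j + 1) - α • f' (x j) := fun j => by
    rw [hx j]; module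
  rw [show k + 2 = k + 1 + 1 from rfl, map_sub, smul_sub, hv (k + 1), hv k]
  module

theorem primal_descent (hf : ∀ p, HasGradientAt f (f' p) p)
    (hLip : ∀ p q, ‖f' p - f' q‖ ≤ Lf * ‖p - q‖) (hα : α ≠ 0)
    (hx : PrimalUpdate A f' α x y) (k : ℕ) :
    f (x (k + 1)) + ⟪y k, A (x (k + 1))⟫
      ≤ f (x k) + ⟪y k, A (x k)⟫ + (Lf / 2 - 1 / α) * ‖x (k + 1) - x k‖ ^ 2 := by
  have hgrad : f' (x k) + adjoint A (y k) = (-α⁻¹) • (x (k + 1) - x k) := by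
    rw [hx k, sub_sub_cancel_left, smul_neg, neg_smul, neg_neg, smul_smul, inv_mul_cancel₀ hα,
      one_smul]
  have hinner : ⟪f' (x k), x (k + 1) - x k⟫ + (⟪y k, A (x (k + 1))⟫ - ⟪y k, A (x k)⟫)
      = -(1 / α) * ‖x (k + 1) - x k‖ ^ 2 := by
    rw [← inner_sub_right, ← map_sub, ← adjoint_inner_left, ← inner_add_left, hgrad,
      real_inner_smul_left, real_inner_self_eq_norm_sq, one_div]
  linarith [le_add_inner_add_sq_of_lipschitz_gradient hf hLip (x k) (x (k + 1))]

theorem dual_optimality (hconv : ConvexOn ℝ univ hs) (hy : DualUpdate A hs α x y) (k : ℕ)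
    (w : Y) :
    hs (y (k + 1)) ≤ hs w - ⟪w - y (k + 1), A ((2 : ℝ) • x (k + 1) - x k)⟫
      + α * ⟪adjoint A (y (k + 1) - y k), adjoint A (w - y (k + 1))⟫ := by
  set v := (2 : ℝ) • x (k + 1) - x k
  have hg : ConvexOn ℝ univ (fun w => hs w - ⟪w, A v⟫) := by
    refine hconv.sub ((innerSL ℝ (A v)).toLinearMap.concaveOn convex_univ |>.congr ?_)
    intro w _
    exact real_inner_comm _ _
  have := hg.le_add_inner_of_forall_le_add_sq (adjoint A).toLinearMap
    (fun w => by simpa only [real_inner_smul_apply_adjoint_self, one_div, ← mul_assoc,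
      ← div_eq_inv_mul, v, coe_coe] using hy k w) w
  simp only [coe_coe] at this
  rw [inner_sub_left]
  linarith

theorem dual_bound (hconv : ConvexOn ℝ univ hs) (hLip : ∀ p q, ‖f' p - f' q‖ ≤ Lf * ‖p - q‖)
    (hα : 0 ≤ α) (hx : PrimalUpdate A f' α x y) (hy : DualUpdate A hs α x y) (k : ℕ) :
    hs (y (k + 1)) - hs (y (k + 2)) + ⟪y (k + 2) - y (k + 1), A (x (k + 2))⟫
      ≤ Lf * ‖x (k + 1) - x k‖
        * (‖x (k + 3) - x (k + 2)‖ + (1 + α * Lf) * ‖x (k + 2) - x (k + 1)‖) := by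
  set v := (2 : ℝ) • x (k + 1) - x k
  set Δy := y (k + 2) - y (k + 1)
  have hopt := dual_optimality hconv hy k (y (k + 2))
  have hextra : x (k + 2) - v + α • adjoint A (y (k + 1) - y k)
      = α • (f' (x k) - f' (x (k + 1))) := by
    rw [smul_adjoint_sub_eq hx k]; module
  have hnext : α • adjoint A Δy = (x (k + 2) - x (k + 3))
      - (x (k + 1) - x (k + 2)) - α • (f' (x (k + 2)) - f' (x (k + 1))) :=
    smul_adjoint_sub_eq hx (k + 1)
  have hgrad : ‖f' (x (k + 2)) - f' (x (k + 1))‖ ≤ Lf * ‖x (k + 2) - x (k + 1)‖ := hLip _ _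
  have hLf : 0 ≤ Lf * ‖x (k + 2) - x (k + 1)‖ := (norm_nonneg _).trans hgrad
  calc hs (y (k + 1)) - hs (y (k + 2)) + ⟪Δy, A (x (k + 2))⟫
      ≤ ⟪adjoint A Δy, x (k + 2) - v + α • adjoint A (y (k + 1) - y k)⟫ := by
        rw [inner_add_right, inner_sub_right, adjoint_inner_left, adjoint_inner_left,
          real_inner_smul_right, ← real_inner_comm (adjoint A Δy)]
        linarith
    _ = ⟪(x (k + 3) - x (k + 2)) + (x (k + 1) - x (k + 2))
          + α • (f' (x (k + 2)) - f' (x (k + 1))), f' (x (k + 1)) - f' (x k)⟫ := by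
        rw [hextra, real_inner_smul_right, ← real_inner_smul_left, hnext, ← inner_neg_neg]
        congr 1 <;> module
    _ ≤ ‖(x (k + 3) - x (k + 2)) + (x (k + 1) - x (k + 2))
          + α • (f' (x (k + 2)) - f' (x (k + 1)))‖ * ‖f' (x (k + 1)) - f' (x k)‖ :=
        real_inner_le_norm _ _
    _ ≤ (‖x (k + 3) - x (k + 2)‖ + ‖x (k + 2) - x (k + 1)‖
          + α * (Lf * ‖x (k + 2) - x (k + 1)‖)) * (Lf * ‖x (k + 1) - x k‖) := by
        gcongr
        · refine norm_add₃_le.trans ?_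
          rw [norm_smul, Real.norm_of_nonneg hα, norm_sub_rev (x (k + 1))]
          gcongr
        · exact hLip _ _
    _ = _ := by rw [norm_sub_rev (x (k + 3))]; ring

theorem cross_terms_le_sq {α δ L D Dm Dp : ℝ} (hα : 0 < α) (hδ : 0 < δ) :
    L * Dm * (Dp + (1 + α * L) * D)
      ≤ δ / α * Dp ^ 2 + δ * (1 + α * L) ^ 2 / α * D ^ 2 + α * L ^ 2 / (2 * δ) * Dm ^ 2 := by
  rw [← sub_nonneg]
  have h : δ / α * Dp ^ 2 + δ * (1 + α * L) ^ 2 / α * D ^ 2 + α * L ^ 2 / (2 * δ) * Dm ^ 2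
      - L * Dm * (Dp + (1 + α * L) * D)
      = ((2 * δ * Dp - α * L * Dm) ^ 2 + (2 * δ * (1 + α * L) * D - α * L * Dm) ^ 2)
        / (4 * δ * α) := by
    field_simp
    ring
  rw [h]
  positivity

theorem lagrangian_succ_le (hf : ∀ p, HasGradientAt f (f' p) p)
    (hLip : ∀ p q, ‖f' p - f' q‖ ≤ Lf * ‖p - q‖) (hconv : ConvexOn ℝ univ hs) (hα : 0 < α)
    (hx : PrimalUpdate A f' α x y) (hy : DualUpdate A hs α x y) (k : ℕ) :
    lagrangian A f hs (x (k + 2)) (y (k + 2))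
      ≤ lagrangian A f hs (x (k + 1)) (y (k + 1)) + (Lf / 2 - 1 / α) * ‖x (k + 2) - x (k + 1)‖ ^ 2
        + Lf * ‖x (k + 1) - x k‖
          * (‖x (k + 3) - x (k + 2)‖ + (1 + α * Lf) * ‖x (k + 2) - x (k + 1)‖) := by
  have hprimal := primal_descent hf hLip hα.ne' hx (k + 1)
  have hdual := dual_bound hconv hLip hα.le hx hy k
  rw [inner_sub_left] at hdual
  simp only [lagrangian]
  linarith

theorem lyap_sufficient_decrease (hf : ∀ p, HasGradientAt f (f' p) p)
    (hLip : ∀ p q, ‖f' p - f' q‖ ≤ Lf * ‖p - q‖) (hconv : ConvexOn ℝ univ hs) (hα : 0 < α)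
    (hx : PrimalUpdate A f' α x y) (hy : DualUpdate A hs α x y)
    {δ a b c : ℝ} (hδ : 0 < δ) (hadef : a = δ / α)
    (hbdef : b = 1/(2*α) - Lf/4 - δ/α - α*δ*Lf^2/2 - δ*Lf + α*Lf^2/(4*δ))
    (hcdef : c = b - α*Lf^2/(2*δ)) (k : ℕ) :
    Lyap A f hs a b (x (k + 2)) (y (k + 2)) (x (k + 3)) (x (k + 1))
        + c * (‖x (k + 2) - x (k + 1)‖ ^ 2 + ‖x (k + 1) - x k‖ ^ 2)
      ≤ Lyap A f hs a b (x (k + 1)) (y (k + 1)) (x (k + 2)) (x k) := by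
  have hstep := lagrangian_succ_le hf hLip hconv hα hx hy k
  have hamgm := cross_terms_le_sq (L := Lf) (D := ‖x (k + 2) - x (k + 1)‖)
    (Dm := ‖x (k + 1) - x k‖) (Dp := ‖x (k + 3) - x (k + 2)‖) hα hδ
  have hcoef : 1 / α - Lf / 2 - a - b - c = δ * (1 + α * Lf) ^ 2 / α := by
    subst hadef hbdef hcdef; field_simp; ring
  have hbc : b - c = α * Lf ^ 2 / (2 * δ) := by rw [hcdef]; ring
  rw [← hadef, ← hbc, ← hcoef] at hamgm
  simp only [lagrangian] at hstep
  simp only [Lyap, norm_sub_rev (x (k + 1)) (x (k + 2)), norm_sub_rev (x (k + 2)) (x (k + 3))]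
  linarith

end PPDG

theorem stmt2_general
    {X : Type*} [NormedAddCommGroup X] [InnerProductSpace ℝ X] [FiniteDimensional ℝ X]
    {Y : Type*} [NormedAddCommGroup Y] [InnerProductSpace ℝ Y] [FiniteDimensional ℝ Y]
    (A : X →L[ℝ] Y)
    (f : X → ℝ) (f' : X → X) (hf : ∀ p, HasGradientAt f (f' p) p)
    (Lf : ℝ) (hLip : ∀ p q, ‖f' p - f' q‖ ≤ Lf * ‖p - q‖)
    (hs : Y → ℝ) (hconv : ConvexOn ℝ Set.univ hs)
    (α : ℝ) (hα : 0 < α)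
    (x : ℕ → X) (y : ℕ → Y)
    (hxiter : ∀ k : ℕ,
      x (k+1) = x k - α • (f' (x k) + (ContinuousLinearMap.adjoint A) (y k)))
    (hyiter : ∀ k : ℕ, ∀ w : Y,
      hs (y (k+1)) - ⟪y (k+1), A ((2:ℝ) • x (k+1) - x k)⟫
        + (1/2) * ⟪α • A ((ContinuousLinearMap.adjoint A) (y (k+1) - y k)), y (k+1) - y k⟫
      ≤ hs w - ⟪w, A ((2:ℝ) • x (k+1) - x k)⟫
        + (1/2) * ⟪α • A ((ContinuousLinearMap.adjoint A) (w - y k)), w - y k⟫)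
    (δ a b c : ℝ) (hδ : 0 < δ)
    (hadef : a = δ / α)
    (hbdef : b = 1/(2*α) - Lf/4 - δ/α - α*δ*Lf^2/2 - δ*Lf + α*Lf^2/(4*δ))
    (hcdef : c = b - α*Lf^2/(2*δ))
    (hcpos : 0 < c) :
    (∀ k : ℕ, 1 ≤ k →
      Lyap A f hs a b (x (k+1)) (y (k+1)) (x (k+2)) (x k)
          + c * (‖x (k+1) - x k‖^2 + ‖x k - x (k-1)‖^2)
        ≤ Lyap A f hs a b (x k) (y k) (x (k+1)) (x (k-1)))
    ∧ (∀ k : ℕ, 1 ≤ k →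
      Lyap A f hs a b (x (k+1)) (y (k+1)) (x (k+2)) (x k)
        ≤ Lyap A f hs a b (x k) (y k) (x (k+1)) (x (k-1))) := by
  have hstep := PPDG.lyap_sufficient_decrease hf hLip hconv hα hxiter hyiter hδ hadef hbdef hcdef
  refine ⟨fun k hk => ?_, fun k hk => ?_⟩ <;> obtain ⟨n, rfl⟩ := Nat.exists_eq_add_of_le' hk <;>
    simp only [Nat.add_sub_cancel]
  · exact hstep n
  · exact le_of_add_le_of_nonneg_left (hstep n) (by positivity)

/-- sufficient decrease of the Lyapunov function along PPDG iterates;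
in particular `k ↦ 𝓛(z^k)` is nonincreasing. -/
theorem stmt2
    {X : Type*} [NormedAddCommGroup X] [InnerProductSpace ℝ X] [FiniteDimensional ℝ X]
    {Y : Type*} [NormedAddCommGroup Y] [InnerProductSpace ℝ Y] [FiniteDimensional ℝ Y]
    (A : X →L[ℝ] Y) (hA : Function.Surjective A)
    (f : X → ℝ) (f' : X → X) (hf : ∀ p, HasGradientAt f (f' p) p)
    (Lf : ℝ) (hLf : 0 < Lf) (hLip : ∀ p q, ‖f' p - f' q‖ ≤ Lf * ‖p - q‖)
    (hs : Y → ℝ) (hconv : ConvexOn ℝ Set.univ hs)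
    (hbdd : ∀ w : Y, BddBelow (Set.range fun p : X => f p + ⟪w, A p⟫ - hs w))
    (α : ℝ) (hα : 0 < α)
    (x : ℕ → X) (y : ℕ → Y)
    (hxiter : ∀ k : ℕ,
      x (k+1) = x k - α • (f' (x k) + (ContinuousLinearMap.adjoint A) (y k)))
    (hyiter : ∀ k : ℕ, ∀ w : Y,
      hs (y (k+1)) - ⟪y (k+1), A ((2:ℝ) • x (k+1) - x k)⟫
        + (1/2) * ⟪α • A ((ContinuousLinearMap.adjoint A) (y (k+1) - y k)), y (k+1) - y k⟫
      ≤ hs w - ⟪w, A ((2:ℝ) • x (k+1) - x k)⟫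
        + (1/2) * ⟪α • A ((ContinuousLinearMap.adjoint A) (w - y k)), w - y k⟫)
    (δ a b c : ℝ) (hδ : 0 < δ)
    (hadef : a = δ / α)
    (hbdef : b = 1/(2*α) - Lf/4 - δ/α - α*δ*Lf^2/2 - δ*Lf + α*Lf^2/(4*δ))
    (hcdef : c = b - α*Lf^2/(2*δ))
    (hapos : 0 < a) (hbpos : 0 < b) (hcpos : 0 < c) :
    (∀ k : ℕ, 1 ≤ k →
      Lyap A f hs a b (x (k+1)) (y (k+1)) (x (k+2)) (x k)
          + c * (‖x (k+1) - x k‖^2 + ‖x k - x (k-1)‖^2)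
        ≤ Lyap A f hs a b (x k) (y k) (x (k+1)) (x (k-1)))
    ∧ (∀ k : ℕ, 1 ≤ k →
      Lyap A f hs a b (x (k+1)) (y (k+1)) (x (k+2)) (x k)
        ≤ Lyap A f hs a b (x k) (y k) (x (k+1)) (x (k-1))) :=
  stmt2_general A f f' hf Lf hLip hs hconv α hα x y hxiter hyiter δ a b c hδ hadef hbdef hcdef hcpos
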